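/- Let n ≥ 2 and let f : ℝ≥0 → ℝ ∪ {−∞} be a strictly increasing function. Then the following are equivalent: (a) for every positive-admitting binary instance with n agents, every allocation chosen by the additive welfarist rule with f is EF1; (b) f satisfies Condition 4. -/

import Mathlib

open scoped BigOperators

noncomputable section

namespace FairDiv

/-- The bundle of goods received by agent `i` under the assignment `A` of goods to agents. -/
def bundle {n m : ℕ} (A : Fin m → Fin n) (i : Fin n) : Finset (Fin m) :=
  Finset.univ.filter fun g => A g = i

/-- Additive utility of agent `i` for a set `S` of goods. -/
def util {n m : ℕ} (u : Fin n → Fin m → ℝ) (i : Fin n) (S : Finset (Fin m)) : ℝ :=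
  ∑ g ∈ S, u i g

/-- Envy-freeness up to one good. -/
def EF1 {n m : ℕ} (u : Fin n → Fin m → ℝ) (A : Fin m → Fin n) : Prop :=
  ∀ i j : Fin n, bundle A j ≠ ∅ →
    ∃ g ∈ bundle A j, util u i ((bundle A j).erase g) ≤ util u i (bundle A i)

/-- Welfare of an allocation under the additive welfarist rule with function `f`. -/
def welfare {n m : ℕ} (f : ℝ → EReal) (u : Fin n → Fin m → ℝ) (A : Fin m → Fin n) : EReal :=
  ∑ i : Fin n, f (util u i (bundle A i))

/-- An allocation is chosen by the additive welfarist rule with `f` if it maximizes welfare. -/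
def Chosen {n m : ℕ} (f : ℝ → EReal) (u : Fin n → Fin m → ℝ) (A : Fin m → Fin n) : Prop :=
  ∀ B : Fin m → Fin n, welfare f u B ≤ welfare f u A

/-- An instance is positive-admitting if some allocation gives everyone positive utility. -/
def PositiveAdmitting {n m : ℕ} (u : Fin n → Fin m → ℝ) : Prop :=
  ∃ B : Fin m → Fin n, ∀ i : Fin n, 0 < util u i (bundle B i)

def IdenticalGood {n m : ℕ} (u : Fin n → Fin m → ℝ) : Prop :=
  ∀ i : Fin n, ∃ a : ℝ, 0 < a ∧ ∀ g : Fin m, u i g = a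

def TwoValue {n m : ℕ} (u : Fin n → Fin m → ℝ) : Prop :=
  ∃ a₁ a₂ : ℝ, a₁ ≠ a₂ ∧ 0 ≤ a₁ ∧ 0 ≤ a₂ ∧ ∀ i g, u i g = a₁ ∨ u i g = a₂

def Normalized {n m : ℕ} (u : Fin n → Fin m → ℝ) : Prop :=
  ∀ i j : Fin n, util u i Finset.univ = util u j Finset.univ

def IntegerValued {n m : ℕ} (u : Fin n → Fin m → ℝ) : Prop :=
  ∀ i g, ∃ z : ℕ, u i g = (z : ℝ)

def Binary {n m : ℕ} (u : Fin n → Fin m → ℝ) : Prop :=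
  ∀ i g, u i g = 0 ∨ u i g = 1

/-- `Δ_{f,k}(x) = f((k+1)x) − f(kx)`, valued in `EReal` (it is `+∞` iff `f(kx) = −∞`). -/
def Delta (f : ℝ → EReal) (k : ℕ) (x : ℝ) : EReal :=
  f (((k : ℝ) + 1) * x) - f ((k : ℝ) * x)

/-- Condition 1: `Δ_{f,k}(b) > Δ_{f,k+1}(a)` for all `k ∈ ℤ≥0` and `a, b ∈ ℝ>0`. -/
def Cond1 (f : ℝ → EReal) : Prop :=
  ∀ k : ℕ, ∀ a b : ℝ, 0 < a → 0 < b → Delta f (k + 1) a < Delta f k b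

/-- Condition 1a: `Δ_{f,k}` is constant on `ℝ>0` for every `k ∈ ℤ>0`. -/
def Cond1a (f : ℝ → EReal) : Prop :=
  ∀ k : ℕ, 0 < k → ∀ x y : ℝ, 0 < x → 0 < y → Delta f k x = Delta f k y

/-- Condition 2. -/
def Cond2 (f : ℝ → EReal) : Prop :=
  ∀ a b c d : ℝ, 0 ≤ a → 0 ≤ b → 0 ≤ c → 0 ≤ d →
    min a b ≤ min c d → a * b < c * d → f a + f b < f c + f d

/-- Condition 3: `Δ_{f,k}(b) > Δ_{f,k+1}(a)` for all `k ∈ ℤ≥0` and `a, b ∈ ℤ>0`. -/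
def Cond3 (f : ℝ → EReal) : Prop :=
  ∀ k : ℕ, ∀ a b : ℕ, 0 < a → 0 < b → Delta f (k + 1) (a : ℝ) < Delta f k (b : ℝ)

/-- Condition 3a. -/
def Cond3a (f : ℝ → EReal) : Prop :=
  ∀ k l : ℕ, l < k → ∀ a b : ℕ, 0 < a → 0 < b → Delta f k (a : ℝ) < Delta f l (b : ℝ)

/-- Condition 3b: `Δ_{f,k}(1) > Δ_{f,k+1}(a) > Δ_{f,k+2}(1)` for `k ∈ ℤ≥0`, `a ∈ ℤ>0`. -/
def Cond3b (f : ℝ → EReal) : Prop :=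
  ∀ k : ℕ, ∀ a : ℕ, 0 < a →
    Delta f (k + 1) (a : ℝ) < Delta f k 1 ∧ Delta f (k + 2) 1 < Delta f (k + 1) (a : ℝ)

/-- Condition 4: `Δ_{f,k}(1) > Δ_{f,k+1}(1)` for all `k ∈ ℤ≥0`. -/
def Cond4 (f : ℝ → EReal) : Prop :=
  ∀ k : ℕ, Delta f (k + 1) 1 < Delta f k 1

/-- Condition 5. -/
def Cond5 (f : ℝ → EReal) : Prop :=
  ∀ a b k l r : ℕ, 0 < a → 0 < b → b ≤ a → l * b + r * a < (k + 1) * b →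
    Delta f (k + 1) (a : ℝ) <
        f (((l : ℝ) + 1) * (b : ℝ) + (r : ℝ) * (a : ℝ)) - f ((l : ℝ) * (b : ℝ) + (r : ℝ) * (a : ℝ))
      ∧ Delta f (k + 2) 1 < Delta f (k + 1) (a : ℝ)

/-- Condition 6a: `f((k+1)b−1) − f(kb−1) > Δ_{f,k}(a)` for all `k, a, b ∈ ℤ>0`. -/
def Cond6a (f : ℝ → EReal) : Prop :=
  ∀ k a b : ℕ, 0 < k → 0 < a → 0 < b →
    Delta f k (a : ℝ) < f (((k : ℝ) + 1) * (b : ℝ) - 1) - f ((k : ℝ) * (b : ℝ) - 1)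

/-- Condition 6b: `f(y+b) − f(y) > f(x+a) − f(x)` whenever `x/a ≥ (y+1)/b`. -/
def Cond6b (f : ℝ → EReal) : Prop :=
  ∀ a b : ℕ, ∀ x y : ℕ, 0 < a → 0 < b → ((y : ℝ) + 1) / (b : ℝ) ≤ (x : ℝ) / (a : ℝ) →
    f ((x : ℝ) + (a : ℝ)) - f (x : ℝ) < f ((y : ℝ) + (b : ℝ)) - f (y : ℝ)

/-- Modified logarithmic function `λ_c(x) = log (x + c)`, with `log 0 = −∞`. -/
def lam (c : ℝ) (x : ℝ) : EReal :=
  if x + c = 0 then ⊥ else ((Real.log (x + c) : ℝ) : EReal)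

/-- The `p`-mean function `φ_p`, with `φ_p(0) = −∞` for `p ≤ 0`. -/
def phi (p : ℝ) (x : ℝ) : EReal :=
  if 0 < p then ((x ^ p : ℝ) : EReal)
  else if x = 0 then ⊥
  else if p = 0 then ((Real.log x : ℝ) : EReal)
  else ((-(x ^ p) : ℝ) : EReal)

/-- Modified harmonic number `h_c` on nonnegative integers. -/
def hmod (c : ℝ) (x : ℕ) : EReal :=
  if c = -1 then
    (if x = 0 then (⊥ : EReal)
     else (((∑ t ∈ Finset.range (x - 1), (1 : ℝ) / ((t : ℝ) + 1)) : ℝ) : EReal))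
  else (((∑ t ∈ Finset.range x, (1 : ℝ) / ((t : ℝ) + 1 + c)) : ℝ) : EReal)

/-- Condition 3b for a function defined on nonnegative integers. -/
def Cond3bNat (f : ℕ → EReal) : Prop :=
  ∀ k : ℕ, ∀ a : ℕ, 0 < a →
    f ((k + 2) * a) - f ((k + 1) * a) < f (k + 1) - f k
    ∧ f (k + 3) - f (k + 2) < f ((k + 2) * a) - f ((k + 1) * a)


/-!
Binary utilities make every bundle value a natural number. Under Condition 4 the increments
`Δ_{f,k}(1)` strictly decrease in `k`. If agent `i`, with value `s` for her own bundle, envies `j`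
even after removing any good, she values at least `s + 2` goods of `A j`. In a welfarist
allocation `j` must value every one of them (otherwise handing it to `i` raises welfare), so
`j` has value `t ≥ s + 2`, and moving one of them changes welfare by
`Δ_{f,s}(1) - Δ_{f,t-1}(1) > 0`.

Conversely, if `Δ_{f,k+1}(1) ≥ Δ_{f,k}(1)`, let agents `0` and `1` share `2k + 2` goods they both
value, every other agent owning one private good. The split `(k + 1, k + 1)` is then no better
than `(k, k + 2)`, so some maximiser of `c ↦ f c + f (2k + 2 - c)` has `c ≤ k`; the corresponding
allocation is welfarist, but agent `0` envies agent `1` by at least two goods.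
-/

open Finset

lemma _root_.EReal.coe_sub_coe_lt_coe_sub_iff {x : EReal} (hx : x ≠ ⊤) (a b c : ℝ) :
    (a : EReal) - b < c - x ↔ x + a < c + b := by
  induction x with
  | bot => simpa [EReal.coe_ne_bot] using EReal.coe_lt_top (a - b)
  | coe x => norm_cast; constructor <;> intro h <;> linarith
  | top => exact absurd rfl hx

section StrictMonoOn

variable {f : ℝ → EReal}

lemma apply_ne_top (hf : StrictMonoOn f (Set.Ici 0)) {x : ℝ} (hx : 0 ≤ x) : f x ≠ ⊤ :=
  (hf (Set.mem_Ici.2 hx) (Set.mem_Ici.2 (by linarith)) (lt_add_one x)).ne_top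

lemma apply_ne_bot (hf : StrictMonoOn f (Set.Ici 0)) {x : ℝ} (hx : 0 < x) : f x ≠ ⊥ :=
  (hf (Set.mem_Ici.2 le_rfl) (Set.mem_Ici.2 hx.le) hx).ne_bot

lemma coe_toReal_apply (hf : StrictMonoOn f (Set.Ici 0)) {x : ℝ} (hx : 0 < x) :
    ((f x).toReal : EReal) = f x :=
  EReal.coe_toReal (apply_ne_top hf hx.le) (apply_ne_bot hf hx)

lemma delta_one_lt_delta_one_iff (hf : StrictMonoOn f (Set.Ici 0)) {s r : ℕ} (hsr : s < r) :
    Delta f r 1 < Delta f s 1 ↔ f s + f ↑(r + 1) < f ↑(s + 1) + f r := by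
  have hr : (0 : ℝ) < r := by exact_mod_cast (Nat.zero_le s).trans_lt hsr
  simp only [Delta, mul_one, ← Nat.cast_add_one]
  rw [← coe_toReal_apply hf hr,
    ← coe_toReal_apply hf (Nat.cast_pos.2 r.succ_pos : (0 : ℝ) < ↑(r + 1)),
    ← coe_toReal_apply hf (Nat.cast_pos.2 s.succ_pos : (0 : ℝ) < ↑(s + 1))]
  exact EReal.coe_sub_coe_lt_coe_sub_iff (apply_ne_top hf s.cast_nonneg) _ _ _

end StrictMonoOn

section Bundles

variable {n m : ℕ}

@[simp]
lemma mem_bundle {A : Fin m → Fin n} {i : Fin n} {g : Fin m} : g ∈ bundle A i ↔ A g = i := by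
  simp [bundle]

lemma disjoint_bundle (A : Fin m → Fin n) {i j : Fin n} (hij : i ≠ j) :
    Disjoint (bundle A i) (bundle A j) :=
  disjoint_left.2 fun _ hi hj => hij ((mem_bundle.1 hi).symm.trans (mem_bundle.1 hj))

lemma bundle_update_self (A : Fin m → Fin n) (g : Fin m) (i : Fin n) :
    bundle (Function.update A g i) i = insert g (bundle A i) := by
  ext g'
  by_cases h : g' = g <;> simp [h]

lemma bundle_update_of_ne (A : Fin m → Fin n) (g : Fin m) {i l : Fin n} (hl : l ≠ i) :
    bundle (Function.update A g i) l = (bundle A l).erase g := by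
  ext g'
  by_cases h : g' = g <;> simp [h, Ne.symm hl]

end Bundles

section Utilities

variable {n m : ℕ} {u : Fin n → Fin m → ℝ}

lemma util_nonneg (hu : ∀ i g, 0 ≤ u i g) (i : Fin n) (S : Finset (Fin m)) : 0 ≤ util u i S :=
  sum_nonneg fun g _ => hu i g

lemma util_mono (hu : ∀ i g, 0 ≤ u i g) (i : Fin n) {S T : Finset (Fin m)} (hST : S ⊆ T) :
    util u i S ≤ util u i T :=
  sum_le_sum_of_subset_of_nonneg hST fun g _ _ => hu i g

lemma util_erase_add (i : Fin n) {S : Finset (Fin m)} {g : Fin m} (hg : g ∈ S) :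
    util u i (S.erase g) + u i g = util u i S :=
  sum_erase_add S _ hg

lemma Binary.nonneg (hb : Binary u) (i : Fin n) (g : Fin m) : 0 ≤ u i g := by
  rcases hb i g with h | h <;> simp [h]

lemma Binary.util_eq_card (hb : Binary u) (i : Fin n) (S : Finset (Fin m)) :
    util u i S = #{g ∈ S | u i g = 1} := by
  rw [util, natCast_card_filter]
  exact sum_congr rfl fun g _ => by rcases hb i g with h | h <;> simp [h]

lemma Binary.util_add_one_le_of_lt (hb : Binary u) {i : Fin n} {S T : Finset (Fin m)}
    (h : util u i S < util u i T) : util u i S + 1 ≤ util u i T := by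
  rw [hb.util_eq_card, hb.util_eq_card] at h ⊢
  exact_mod_cast Nat.cast_lt.1 h

end Utilities

lemma _root_.EReal.exists_sum_eq_coe {ι : Type*} (s : Finset ι) (x : ι → EReal)
    (hbot : ∀ i ∈ s, x i ≠ ⊥) (htop : ∀ i ∈ s, x i ≠ ⊤) : ∃ r : ℝ, ∑ i ∈ s, x i = r := by
  induction s using Finset.cons_induction with
  | empty => exact ⟨0, by simp⟩
  | cons a s ha ih =>
    obtain ⟨r, hr⟩ := ih (fun i hi => hbot i (mem_cons_of_mem hi))
      (fun i hi => htop i (mem_cons_of_mem hi))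
    refine ⟨(x a).toReal + r, ?_⟩
    rw [sum_cons, hr, EReal.coe_add,
      EReal.coe_toReal (htop a (mem_cons_self a s)) (hbot a (mem_cons_self a s))]

section Welfare

variable {n m : ℕ} {f : ℝ → EReal} {u : Fin n → Fin m → ℝ}

lemma welfare_eq_add_add_sum (A : Fin m → Fin n) {i j : Fin n} (hij : i ≠ j) :
    welfare f u A = f (util u i (bundle A i)) + f (util u j (bundle A j))
      + ∑ l ∈ (univ.erase i).erase j, f (util u l (bundle A l)) := by
  rw [welfare, ← add_sum_erase _ _ (mem_univ i), add_assoc,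
    ← add_sum_erase _ _ (mem_erase.2 ⟨hij.symm, mem_univ j⟩)]

lemma welfare_eq_bot (A : Fin m → Fin n) {l : Fin n} (hl : f (util u l (bundle A l)) = ⊥) :
    welfare f u A = ⊥ := by
  rw [welfare, ← add_sum_erase _ _ (mem_univ l), hl, EReal.bot_add]

lemma welfare_lt_welfare_update (A : Fin m → Fin n) {i j : Fin n} (hij : i ≠ j) {g : Fin m}
    (hg : A g = j) (hbot : ∀ l, f (util u l (bundle A l)) ≠ ⊥)
    (htop : ∀ l, f (util u l (bundle A l)) ≠ ⊤)
    (hlt : f (util u i (bundle A i)) + f (util u j (bundle A j))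
      < f (util u i (bundle A i) + u i g) + f (util u j (bundle A j) - u j g)) :
    welfare f u A < welfare f u (Function.update A g i) := by
  have hi : util u i (bundle (Function.update A g i) i) = util u i (bundle A i) + u i g := by
    rw [bundle_update_self, util, sum_insert (by simp [hg, hij.symm]), add_comm, util]
  have hj : util u j (bundle (Function.update A g i) j) = util u j (bundle A j) - u j g := by
    rw [bundle_update_of_ne _ _ hij.symm, ← util_erase_add j (mem_bundle.2 hg),
      add_sub_cancel_right]
  have hrest : ∀ l ∈ (univ.erase i).erase j, bundle (Function.update A g i) l = bundle A l := by
    intro l hl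
    obtain ⟨hlj, hli⟩ := mem_erase.1 hl
    rw [bundle_update_of_ne _ _ (mem_erase.1 hli).1,
      erase_eq_of_notMem (by simp [hg, Ne.symm hlj])]
  obtain ⟨r, hr⟩ := EReal.exists_sum_eq_coe ((univ.erase i).erase j)
    (fun l => f (util u l (bundle A l))) (fun l _ => hbot l) (fun l _ => htop l)
  have hsum : ∑ l ∈ (univ.erase i).erase j, f (util u l (bundle (Function.update A g i) l))
      = ∑ l ∈ (univ.erase i).erase j, f (util u l (bundle A l)) :=
    sum_congr rfl fun l hl => by rw [hrest l hl]
  rw [welfare_eq_add_add_sum _ hij, welfare_eq_add_add_sum _ hij, hi, hj, hsum, hr]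
  exact EReal.add_lt_add_right_coe hlt r

lemma Chosen.apply_util_ne_bot (hf : StrictMonoOn f (Set.Ici 0)) (hadm : PositiveAdmitting u)
    {A : Fin m → Fin n} (hA : Chosen f u A) (l : Fin n) : f (util u l (bundle A l)) ≠ ⊥ := by
  intro hl
  obtain ⟨B, hB⟩ := hadm
  obtain ⟨w, hw⟩ := EReal.exists_sum_eq_coe univ (fun l => f (util u l (bundle B l)))
    (fun l _ => apply_ne_bot hf (hB l)) (fun l _ => apply_ne_top hf (hB l).le)
  have hBA := hA B
  rw [welfare_eq_bot A hl, welfare, hw, le_bot_iff] at hBA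
  exact EReal.coe_ne_bot w hBA

lemma Chosen.apply_add_apply_le (hf : StrictMonoOn f (Set.Ici 0)) (hu : ∀ i g, 0 ≤ u i g)
    (hadm : PositiveAdmitting u) {A : Fin m → Fin n} (hA : Chosen f u A) {i j : Fin n}
    (hij : i ≠ j) {g : Fin m} (hg : A g = j) :
    f (util u i (bundle A i) + u i g) + f (util u j (bundle A j) - u j g)
      ≤ f (util u i (bundle A i)) + f (util u j (bundle A j)) :=
  not_lt.1 fun hlt => (hA _).not_gt <| welfare_lt_welfare_update A hij hg
    (hA.apply_util_ne_bot hf hadm) (fun l => apply_ne_top hf (util_nonneg hu l _)) hlt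

end Welfare

section Sufficiency

variable {n m : ℕ} {f : ℝ → EReal} {u : Fin n → Fin m → ℝ}

lemma Binary.exists_eq_one_add_two_le_of_envy (hb : Binary u) {i : Fin n}
    {X T : Finset (Fin m)} (hT : T.Nonempty) (henvy : ∀ g ∈ T, util u i X < util u i (T.erase g)) :
    ∃ g ∈ T, u i g = 1 ∧ util u i X + 2 ≤ util u i T := by
  obtain ⟨g₀, hg₀⟩ := hT
  have hpos : 0 < util u i (T.erase g₀) := (util_nonneg hb.nonneg i X).trans_lt (henvy g₀ hg₀)
  obtain ⟨g, hg, hne⟩ := exists_ne_zero_of_sum_ne_zero hpos.ne'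
  have hgT := mem_of_mem_erase hg
  have hg1 : u i g = 1 := (hb i g).resolve_left hne
  refine ⟨g, hgT, hg1, ?_⟩
  have h := hb.util_add_one_le_of_lt (henvy g hgT)
  rw [← util_erase_add i hgT, hg1]
  linarith

lemma Chosen.eq_one_of_eq_one (hf : StrictMonoOn f (Set.Ici 0)) (hb : Binary u)
    (hadm : PositiveAdmitting u) {A : Fin m → Fin n} (hA : Chosen f u A) {i j : Fin n}
    (hij : i ≠ j) {g : Fin m} (hg : A g = j) (hig : u i g = 1) : u j g = 1 := by
  refine (hb j g).resolve_left fun hjg => ?_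
  have hmove := hA.apply_add_apply_le hf hb.nonneg hadm hij hg
  rw [hig, hjg, sub_zero] at hmove
  have hsucc : f (util u i (bundle A i)) < f (util u i (bundle A i) + 1) :=
    hf (util_nonneg hb.nonneg i _)
      (Set.mem_Ici.2 (by linarith [util_nonneg hb.nonneg i (bundle A i)])) (lt_add_one _)
  rw [← EReal.coe_toReal (apply_ne_top hf (util_nonneg hb.nonneg j (bundle A j)))
    (hA.apply_util_ne_bot hf hadm j)] at hmove
  exact (EReal.add_lt_add_right_coe hsucc _).not_ge hmove

lemma Chosen.util_le_util_self (hf : StrictMonoOn f (Set.Ici 0)) (hb : Binary u)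
    (hadm : PositiveAdmitting u) {A : Fin m → Fin n} (hA : Chosen f u A) {i j : Fin n}
    (hij : i ≠ j) : util u i (bundle A j) ≤ util u j (bundle A j) := by
  refine sum_le_sum fun g hg => ?_
  rcases hb i g with hig | hig
  · exact hig ▸ hb.nonneg j g
  · rw [hig, hA.eq_one_of_eq_one hf hb hadm hij (mem_bundle.1 hg) hig]

theorem Chosen.ef1_of_cond4 (hf : StrictMonoOn f (Set.Ici 0)) (h4 : Cond4 f) (hb : Binary u)
    (hadm : PositiveAdmitting u) {A : Fin m → Fin n} (hA : Chosen f u A) : EF1 u A := by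
  intro i j hj
  by_contra hnot
  push Not at hnot
  obtain ⟨g, hgj, hgi, henvy⟩ :=
    hb.exists_eq_one_add_two_le_of_envy (nonempty_iff_ne_empty.2 hj) hnot
  have hij : i ≠ j := by
    rintro rfl
    linarith [hnot g hgj, util_mono hb.nonneg i (erase_subset g (bundle A i))]
  have hgj1 := hA.eq_one_of_eq_one hf hb hadm hij (mem_bundle.1 hgj) hgi
  have hjj := hA.util_le_util_self hf hb hadm hij
  have hmove := hA.apply_add_apply_le hf hb.nonneg hadm hij (mem_bundle.1 hgj)
  rw [hb.util_eq_card i (bundle A i)] at henvy hmove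
  rw [hb.util_eq_card j (bundle A j)] at hjj hmove
  set s := #{g ∈ bundle A i | u i g = 1}
  set t := #{g ∈ bundle A j | u j g = 1}
  have hst : s + 2 ≤ t := by exact_mod_cast henvy.trans hjj
  obtain ⟨r, hr⟩ : ∃ r, t = r + 1 := ⟨t - 1, by omega⟩
  have hsr : s < r := by omega
  have hcond := (delta_one_lt_delta_one_iff hf hsr).1
    (strictAnti_nat_of_succ_lt (f := fun k => Delta f k 1) h4 hsr)
  rw [hr, hgi, hgj1] at hmove
  push_cast at hcond hmove
  rw [add_sub_cancel_right] at hmove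
  exact (hcond.trans_le hmove).false

end Sufficiency

section Necessity

lemma exists_le_maximizer_add_sub {α : Type*} [LinearOrder α] [AddCommMagma α] (F : ℕ → α)
    (k : ℕ) (hk : F (k + 1) + F (k + 1) ≤ F k + F (k + 2)) :
    ∃ a ≤ k, ∀ c ≤ 2 * k + 2, F c + F (2 * k + 2 - c) ≤ F a + F (2 * k + 2 - a) := by
  obtain ⟨c₀, hc₀, hmax⟩ := exists_max_image (range (2 * k + 3))
    (fun c => F c + F (2 * k + 2 - c)) ⟨0, mem_range.2 (by omega)⟩
  replace hmax : ∀ c ≤ 2 * k + 2, F c + F (2 * k + 2 - c) ≤ F c₀ + F (2 * k + 2 - c₀) :=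
    fun c hc => hmax c (mem_range.2 (by omega))
  rw [mem_range] at hc₀
  rcases lt_trichotomy c₀ (k + 1) with h | rfl | h
  · exact ⟨c₀, by omega, hmax⟩
  · refine ⟨k, le_rfl, fun c hc => (hmax c hc).trans ?_⟩
    rwa [show 2 * k + 2 - (k + 1) = k + 1 by omega, show 2 * k + 2 - k = k + 2 by omega]
  · refine ⟨2 * k + 2 - c₀, by omega, fun c hc => (hmax c hc).trans_eq ?_⟩
    rw [show 2 * k + 2 - (2 * k + 2 - c₀) = c₀ by omega, add_comm]

lemma card_filter_le_val_lt {M : ℕ} (a : ℕ) {c : ℕ} (hc : c ≤ M) :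
    #{g : Fin M | a ≤ (g : ℕ) ∧ (g : ℕ) < c} = c - a := by
  rw [← card_map Fin.valEmbedding, ← Nat.card_Ico a c]
  congr 1
  ext x
  simp only [mem_map, mem_filter, mem_univ, true_and, Fin.valEmbedding_apply, mem_Ico]
  exact ⟨fun ⟨g, hg, hgx⟩ => hgx ▸ hg, fun hx => ⟨⟨x, by omega⟩, hx, rfl⟩⟩

/-- Agents `0` and `1` value exactly the goods below `2k + 2`; every other agent `l` values only
the good `2k + l`. -/
def pairedInstance (n k : ℕ) : Fin (n + 2) → Fin (2 * k + 2 + n) → ℝ := fun i g =>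
  if (i : ℕ) < 2 then (if (g : ℕ) < 2 * k + 2 then 1 else 0)
  else (if (g : ℕ) = 2 * k + i then 1 else 0)

def pairedAlloc (n k a : ℕ) : Fin (2 * k + 2 + n) → Fin (n + 2) := fun g =>
  if (g : ℕ) < a then 0 else if (g : ℕ) < 2 * k + 2 then 1 else ⟨g - 2 * k, by omega⟩

variable {n k : ℕ}

lemma binary_pairedInstance : Binary (pairedInstance n k) := by
  intro i g
  unfold pairedInstance
  split_ifs <;> simp

lemma util_pairedInstance_of_lt_two {i : Fin (n + 2)} (hi : (i : ℕ) < 2)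
    (S : Finset (Fin (2 * k + 2 + n))) :
    util (pairedInstance n k) i S = #(S.filter fun g : Fin _ => (g : ℕ) < 2 * k + 2) := by
  rw [util, natCast_card_filter]
  exact sum_congr rfl fun g _ => by simp [pairedInstance, hi]

lemma util_pairedInstance_of_two_le {l : Fin (n + 2)} (hl : 2 ≤ (l : ℕ))
    (S : Finset (Fin (2 * k + 2 + n))) :
    util (pairedInstance n k) l S = if (⟨2 * k + l, by omega⟩ : Fin _) ∈ S then 1 else 0 := by
  rw [util, ← sum_ite_eq' S _ fun _ => (1 : ℝ)]
  exact sum_congr rfl fun g _ => by simp [pairedInstance, Fin.ext_iff, Nat.not_lt.2 hl]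

lemma util_pairedInstance_le_one {l : Fin (n + 2)} (hl : 2 ≤ (l : ℕ))
    (S : Finset (Fin (2 * k + 2 + n))) : util (pairedInstance n k) l S ≤ 1 := by
  rw [util_pairedInstance_of_two_le hl]
  split_ifs <;> norm_num

lemma val_pairedAlloc (a : ℕ) (g : Fin (2 * k + 2 + n)) :
    (pairedAlloc n k a g : ℕ) = if (g : ℕ) < a then 0 else if (g : ℕ) < 2 * k + 2 then 1
      else (g : ℕ) - 2 * k := by
  unfold pairedAlloc
  split_ifs <;> simp

lemma util_pairedAlloc_zero {a : ℕ} (ha : a ≤ 2 * k + 2) :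
    util (pairedInstance n k) 0 (bundle (pairedAlloc n k a) 0) = a := by
  have hbundle : ((bundle (pairedAlloc n k a) 0).filter fun g : Fin _ => (g : ℕ) < 2 * k + 2)
      = univ.filter fun g : Fin _ => (g : ℕ) < a := by
    ext g
    simp only [mem_filter, mem_bundle, Fin.ext_iff, val_pairedAlloc, mem_univ, true_and,
      Fin.val_zero]
    split_ifs <;> grind
  rw [util_pairedInstance_of_lt_two (by simp), hbundle, Fin.card_filter_val_lt,
    min_eq_right (by omega)]

lemma util_pairedAlloc_one (a : ℕ) {i : Fin (n + 2)} (hi : (i : ℕ) < 2) :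
    util (pairedInstance n k) i (bundle (pairedAlloc n k a) 1) = ↑(2 * k + 2 - a) := by
  have hbundle : ((bundle (pairedAlloc n k a) 1).filter fun g : Fin _ => (g : ℕ) < 2 * k + 2)
      = univ.filter fun g : Fin _ => a ≤ (g : ℕ) ∧ (g : ℕ) < 2 * k + 2 := by
    ext g
    simp only [mem_filter, mem_bundle, Fin.ext_iff, val_pairedAlloc, mem_univ, true_and,
      Fin.val_one]
    split_ifs <;> grind
  rw [util_pairedInstance_of_lt_two hi, hbundle, card_filter_le_val_lt a (by omega)]

lemma util_pairedAlloc_of_two_le {a : ℕ} (ha : a ≤ 2 * k + 2) {l : Fin (n + 2)}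
    (hl : 2 ≤ (l : ℕ)) :
    util (pairedInstance n k) l (bundle (pairedAlloc n k a) l) = 1 := by
  rw [util_pairedInstance_of_two_le hl, if_pos]
  simp only [mem_bundle, Fin.ext_iff, val_pairedAlloc]
  split_ifs <;> omega

lemma positiveAdmitting_pairedInstance : PositiveAdmitting (pairedInstance n k) := by
  refine ⟨pairedAlloc n k 1, fun i => ?_⟩
  rcases lt_or_ge (i : ℕ) 2 with hi | hi
  · obtain rfl | rfl : i = 0 ∨ i = 1 := by
      simp only [Fin.ext_iff, Fin.val_zero, Fin.val_one]
      omega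
    · rw [util_pairedAlloc_zero (by omega)]; norm_num
    · rw [util_pairedAlloc_one 1 hi]; exact Nat.cast_pos.2 (by omega)
  · rw [util_pairedAlloc_of_two_le (by omega) hi]; norm_num

lemma not_ef1_pairedAlloc {a : ℕ} (ha : a ≤ k) :
    ¬ EF1 (pairedInstance n k) (pairedAlloc n k a) := by
  intro hef
  have hmem : (⟨a, by omega⟩ : Fin (2 * k + 2 + n)) ∈ bundle (pairedAlloc n k a) 1 := by
    simp only [mem_bundle, Fin.ext_iff, val_pairedAlloc, Fin.val_one]
    split_ifs <;> grind
  obtain ⟨g, hg, hle⟩ := hef 0 1 (ne_empty_of_mem hmem)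
  have hsplit := util_erase_add (u := pairedInstance n k) 0 hg
  rw [util_pairedAlloc_one a (by simp), Nat.cast_sub (by omega)] at hsplit
  rw [util_pairedAlloc_zero (by omega)] at hle
  have hg1 : pairedInstance n k 0 g ≤ 1 := by
    rcases binary_pairedInstance 0 g with h | h <;> simp [h]
  have hak : (a : ℝ) ≤ k := by exact_mod_cast ha
  push_cast at hsplit
  linarith

lemma chosen_pairedAlloc {f : ℝ → EReal} (hf : MonotoneOn f (Set.Ici 0)) {a : ℕ}
    (ha : a ≤ 2 * k + 2)
    (hmax : ∀ c ≤ 2 * k + 2, f c + f ↑(2 * k + 2 - c) ≤ f a + f ↑(2 * k + 2 - a)) :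
    Chosen f (pairedInstance n k) (pairedAlloc n k a) := by
  intro B
  have h01 : (0 : Fin (n + 2)) ≠ 1 := by simp
  rw [welfare_eq_add_add_sum B h01, welfare_eq_add_add_sum _ h01, util_pairedAlloc_zero ha,
    util_pairedAlloc_one a (by simp)]
  refine add_le_add ?_ (sum_le_sum fun l hl => ?_)
  · rw [util_pairedInstance_of_lt_two (by simp), util_pairedInstance_of_lt_two (by simp)]
    set c₀ := #((bundle B 0).filter fun g : Fin _ => (g : ℕ) < 2 * k + 2)
    set c₁ := #((bundle B 1).filter fun g : Fin _ => (g : ℕ) < 2 * k + 2)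
    have hc : c₀ + c₁ ≤ 2 * k + 2 := by
      rw [← card_union_of_disjoint (disjoint_filter_filter (disjoint_bundle B h01)),
        ← filter_union]
      calc _ ≤ #(univ.filter fun g : Fin (2 * k + 2 + n) => (g : ℕ) < 2 * k + 2) :=
            card_le_card (filter_subset_filter _ (subset_univ _))
        _ = 2 * k + 2 := by rw [Fin.card_filter_val_lt, min_eq_right (by omega)]
    calc f c₀ + f c₁ ≤ f c₀ + f ↑(2 * k + 2 - c₀) :=
          add_le_add le_rfl (hf (Set.mem_Ici.2 (Nat.cast_nonneg _))
            (Set.mem_Ici.2 (Nat.cast_nonneg _)) (Nat.cast_le.2 (by omega)))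
      _ ≤ _ := hmax c₀ (by omega)
  · have hl2 : 2 ≤ (l : ℕ) := by
      simp only [mem_erase, ne_eq, Fin.ext_iff, Fin.val_zero, Fin.val_one, mem_univ,
        and_true] at hl
      omega
    rw [util_pairedAlloc_of_two_le ha hl2]
    exact hf (util_nonneg binary_pairedInstance.nonneg l _) (Set.mem_Ici.2 zero_le_one)
      (util_pairedInstance_le_one hl2 _)

theorem exists_not_ef1_of_not_cond4 {f : ℝ → EReal} (hf : StrictMonoOn f (Set.Ici 0))
    (h4 : ¬ Cond4 f) : ∃ m, ∃ u : Fin (n + 2) → Fin m → ℝ,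
      Binary u ∧ PositiveAdmitting u ∧ ∃ A, Chosen f u A ∧ ¬ EF1 u A := by
  obtain ⟨k, hk⟩ : ∃ k, ¬ Delta f (k + 1) 1 < Delta f k 1 := by
    simpa only [Cond4, not_forall] using h4
  have hconvex : f ↑(k + 1) + f ↑(k + 1) ≤ f ↑k + f ↑(k + 2) :=
    not_lt.1 fun h => hk ((delta_one_lt_delta_one_iff hf k.lt_succ_self).2 h)
  obtain ⟨a, hak, hmax⟩ := exists_le_maximizer_add_sub (fun c : ℕ => f c) k hconvex
  exact ⟨_, pairedInstance n k, binary_pairedInstance, positiveAdmitting_pairedInstance,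
    pairedAlloc n k a, chosen_pairedAlloc hf.monotoneOn (by omega) hmax, not_ef1_pairedAlloc hak⟩

end Necessity

theorem integer_binary_general (n : ℕ) (hn : 2 ≤ n) (f : ℝ → EReal)
    (hfmono : StrictMonoOn f (Set.Ici (0 : ℝ))) :
    (∀ m : ℕ, ∀ u : Fin n → Fin m → ℝ, (∀ i g, 0 ≤ u i g) →
        Binary u → PositiveAdmitting u →
        ∀ A : Fin m → Fin n, Chosen f u A → EF1 u A)
    ↔ Cond4 f := by
  refine ⟨fun hall => ?_, fun h4 m u _ hb hadm A hA => hA.ef1_of_cond4 hfmono h4 hb hadm⟩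
  obtain ⟨n, rfl⟩ : ∃ n', n = n' + 2 := ⟨n - 2, by omega⟩
  by_contra h4
  obtain ⟨m, u, hb, hadm, A, hA, hnot⟩ := exists_not_ef1_of_not_cond4 hfmono h4
  exact hnot (hall m u hb.nonneg hb hadm A hA)

theorem integer_binary (n : ℕ) (hn : 2 ≤ n) (f : ℝ → EReal)
    (hfmono : StrictMonoOn f (Set.Ici (0 : ℝ)))
    (hftop : ∀ x : ℝ, 0 ≤ x → f x ≠ ⊤) :
    (∀ m : ℕ, ∀ u : Fin n → Fin m → ℝ, (∀ i g, 0 ≤ u i g) →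
        Binary u → PositiveAdmitting u →
        ∀ A : Fin m → Fin n, Chosen f u A → EF1 u A)
    ↔ Cond4 f :=
  integer_binary_general n hn f hfmono

end FairDiv
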